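/- Let M and N be symmetric nonnegative definite matrices. If M and N commute, then Tr(√M √N) = Tr(√(MN)). In particular, for U strictly positive definite, Tr(U + (−R)U⁻¹) ≥ 2 Tr √(−R) whenever −R is nonnegative definite, and equality holds iff U = √(−R). -/

import Mathlib

/-!
Both parts are statements about the square root `CFC.sqrt` of the continuous functional calculus,
which agrees with the eigendecomposition square root. Square roots of commuting nonnegative
matrices commute, so `√M * √N` is nonnegative with square `M * N`; uniqueness of nonnegative
square roots gives `√M * √N = √(M * N)`. For the inequality put `S = √(-R)`: then
`U + S² U⁻¹ - 2 S` and `(U - S)ᴴ U⁻¹ (U - S)` have the same trace, which is nonnegative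
because `U⁻¹` is positive definite, and vanishes only when `U = S`.
-/

open Matrix

namespace Matrix.PosSemidef

open scoped ComplexOrder

/-- The positive semidefinite square root of a positive semidefinite matrix
(removed from Mathlib; reinstated with its December 2024 definition). -/
noncomputable def sqrt {n 𝕜 : Type*} [Fintype n] [DecidableEq n] [RCLike 𝕜]
    {A : Matrix n n 𝕜} (hA : A.PosSemidef) : Matrix n n 𝕜 :=
  hA.1.eigenvectorUnitary.1 * diagonal ((↑) ∘ Real.sqrt ∘ hA.1.eigenvalues) *
  (star hA.1.eigenvectorUnitary : Matrix n n 𝕜)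

end Matrix.PosSemidef

open scoped ComplexOrder MatrixOrder

namespace CFC

variable {A : Type*} [PartialOrder A] [Ring A] [StarRing A] [TopologicalSpace A]
  [StarOrderedRing A] [Algebra ℝ A] [ContinuousFunctionalCalculus ℝ A IsSelfAdjoint]
  [NonnegSpectrumClass ℝ A] [IsTopologicalRing A] [T2Space A]

lemma commute_sqrt_sqrt {a b : A} (h : Commute a b) : Commute (sqrt a) (sqrt b) := by
  rw [sqrt_eq_cfc, sqrt_eq_cfc]
  exact (h.symm.cfc_nnreal _).symm.cfc_nnreal _

lemma sqrt_mul_of_commute {a b : A} (ha : 0 ≤ a) (hb : 0 ≤ b) (h : Commute a b) :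
    sqrt (a * b) = sqrt a * sqrt b := by
  have hs := commute_sqrt_sqrt h
  refine sqrt_unique ?_ (hs.mul_nonneg (sqrt_nonneg a) (sqrt_nonneg b))
  rw [hs.symm.mul_mul_mul_comm, sqrt_mul_sqrt_self a, sqrt_mul_sqrt_self b]

end CFC

namespace Matrix

variable {n 𝕜 : Type*} [Fintype n] [DecidableEq n] [RCLike 𝕜]

lemma PosSemidef.sqrt_eq_cfcSqrt {A : Matrix n n 𝕜} (hA : A.PosSemidef) :
    hA.sqrt = CFC.sqrt A := by
  rw [CFC.sqrt_eq_real_sqrt A hA.nonneg, cfcₙ_eq_cfc, hA.1.cfc_eq]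
  rfl

lemma PosDef.trace_conjTranspose_mul_mul_same_eq_zero_iff {A : Matrix n n 𝕜} (hA : A.PosDef)
    (B : Matrix n n 𝕜) : (Bᴴ * A * B).trace = 0 ↔ B = 0 := by
  obtain ⟨y, hy, rfl⟩ := CStarAlgebra.isStrictlyPositive_iff_eq_star_mul_self.mp
    hA.isStrictlyPositive
  rw [star_eq_conjTranspose, mul_assoc, mul_assoc, ← mul_assoc Bᴴ,
    ← conjTranspose_mul, trace_conjTranspose_mul_self_eq_zero_iff]
  exact hy.mul_right_eq_zero

lemma PosDef.trace_add_mul_self_mul_inv {U S : Matrix n n 𝕜} (hU : U.PosDef)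
    (hS : S.IsHermitian) :
    (U + S * S * U⁻¹).trace = ((U - S)ᴴ * U⁻¹ * (U - S)).trace + 2 * S.trace := by
  have hdet : IsUnit U.det := (isUnit_iff_isUnit_det U).mp hU.isUnit
  have hcycle : (S * U⁻¹ * S).trace = (S * S * U⁻¹).trace := trace_mul_cycle S U⁻¹ S
  rw [conjTranspose_sub, hU.isHermitian.eq, hS.eq]
  simp only [sub_mul, mul_sub, mul_nonsing_inv U hdet, nonsing_inv_mul_cancel_right _ _ hdet,
    one_mul, trace_add, trace_sub, hcycle]
  ring

lemma PosDef.two_mul_trace_le_trace_add_mul_self_mul_inv {U S : Matrix n n 𝕜} (hU : U.PosDef)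
    (hS : S.IsHermitian) : 2 * S.trace ≤ (U + S * S * U⁻¹).trace := by
  rw [hU.trace_add_mul_self_mul_inv hS]
  exact le_add_of_nonneg_left (hU.inv.posSemidef.conjTranspose_mul_mul_same _).trace_nonneg

lemma PosDef.trace_add_mul_self_mul_inv_eq_iff {U S : Matrix n n 𝕜} (hU : U.PosDef)
    (hS : S.IsHermitian) : (U + S * S * U⁻¹).trace = 2 * S.trace ↔ U = S := by
  rw [hU.trace_add_mul_self_mul_inv hS, add_eq_right,
    hU.inv.trace_conjTranspose_mul_mul_same_eq_zero_iff, sub_eq_zero]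

end Matrix

/-- If `M` and `N` are commuting symmetric nonnegative definite matrices then
`Tr(√M √N) = Tr(√(MN))`; in particular for `U` positive definite and `-R`
nonnegative definite, `Tr(U + (-R) U⁻¹) ≥ 2 Tr √(-R)`, with equality iff
`U = √(-R)`. -/
theorem stmt7 {m : ℕ} (M N : Matrix (Fin m) (Fin m) ℝ)
    (hM : M.PosSemidef) (hN : N.PosSemidef) (hcomm : M * N = N * M)
    (hMN : (M * N).PosSemidef) :
    (hM.sqrt * hN.sqrt).trace = hMN.sqrt.trace ∧
    ∀ (U R : Matrix (Fin m) (Fin m) ℝ) (hU : U.PosDef) (hR : (-R).PosSemidef),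
      2 * hR.sqrt.trace ≤ (U + (-R) * U⁻¹).trace ∧
      ((U + (-R) * U⁻¹).trace = 2 * hR.sqrt.trace ↔ U = hR.sqrt) := by
  refine ⟨?_, fun U R hU hR => ?_⟩
  · rw [hM.sqrt_eq_cfcSqrt, hN.sqrt_eq_cfcSqrt, hMN.sqrt_eq_cfcSqrt,
      CFC.sqrt_mul_of_commute hM.nonneg hN.nonneg hcomm]
  · have hS : (CFC.sqrt (-R)).IsHermitian := (CFC.sqrt_nonneg (-R)).posSemidef.isHermitian
    have hle := hU.two_mul_trace_le_trace_add_mul_self_mul_inv hS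
    have heq := hU.trace_add_mul_self_mul_inv_eq_iff hS
    rw [CFC.sqrt_mul_sqrt_self (-R) hR.nonneg] at hle heq
    rw [hR.sqrt_eq_cfcSqrt]
    exact ⟨hle, heq⟩
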